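/- In the Concord game (row payoffs: (T,L)=4, (T,R)=8, (B,L)=6, (B,R)=10; column payoffs: (T,L)=4, (T,R)=6, (B,L)=8, (B,R)=10), adding c₂ = 3 to the column player's payoff in the column L yields a Decline game whose unique pure Nash equilibrium is (B, L), at which the row player's payoff is 6, strictly less than the row player's base-game equilibrium payoff of 10. -/

import Mathlib

inductive RS | T | B
deriving DecidableEq

instance instFintypeRS : Fintype RS :=
  ⟨{RS.T, RS.B}, fun x => by cases x <;> simp⟩

inductive CS | L | R
deriving DecidableEq

instance instFintypeCS : Fintype CS :=
  ⟨{CS.L, CS.R}, fun x => by cases x <;> simp⟩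

/-- Row payoffs of the Concord game. -/
def ur : RS → CS → ℝ
  | .T, .L => 4 | .T, .R => 8 | .B, .L => 6 | .B, .R => 10

/-- Column payoffs of the Concord game. -/
def uc : RS → CS → ℝ
  | .T, .L => 4 | .T, .R => 6 | .B, .L => 8 | .B, .R => 10

/-- Decline-game column payoffs: add `c₂ = 3` in column `L`. -/
def ucD : RS → CS → ℝ := fun r c => uc r c + (if c = CS.L then 3 else 0)

/-- With `c₂ = 3` added in column `L`, the Decline game's unique pure Nash equilibrium is
`(B, L)`, where the row player's payoff is `6 < 10`, their base-game equilibrium payoff. -/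
theorem concord_decline_equilibrium :
    (∀ r : RS, ∀ c : CS,
      ((∀ r' : RS, ur r c ≥ ur r' c) ∧ (∀ c' : CS, ucD r c ≥ ucD r c')) ↔
        (r = RS.B ∧ c = CS.L)) ∧
    ur RS.B CS.L = 6 ∧ ur RS.B CS.R = 10 ∧ ur RS.B CS.L < ur RS.B CS.R := by
  refine ⟨fun r c => ?_, by norm_num [ur], by norm_num [ur], by norm_num [ur]⟩
  constructor
  · rintro ⟨h1, h2⟩
    cases r <;> cases c <;>
      first
        | exact ⟨rfl, rfl⟩
        | (exfalso; first
            | (have := h1 RS.B; simp [ur] at this; linarith)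
            | (have := h2 CS.L; simp [ucD, uc] at this; linarith))
  · rintro ⟨rfl, rfl⟩
    refine ⟨fun r' => ?_, fun c' => ?_⟩ <;> [cases r'; cases c'] <;> (simp [ur, ucD, uc]; try norm_num)
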